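/- On L²([0,1], λ), the operators (T₁φ)(x) = χ_{[1/2,1]}(x)·√2·φ(Λ(x)) and (T₂φ)(x) = χ_{[0,1/2]}(x)·√2·φ(Λ(x)) (Λ the tent map) are isometries satisfying the Cuntz O₂ relations: T_i* T_j = δ_{ij} I and T₁T₁* + T₂T₂* = I. -/

import Mathlib

open MeasureTheory ContinuousLinearMap

noncomputable def tentMap (x : ℝ) : ℝ := 1 - |2 * x - 1|
noncomputable def μ01 : Measure ℝ := volume.restrict (Set.Icc (0:ℝ) 1)

namespace TC
open Set ENNReal MeasureTheory Measure

lemma tent_cont : Continuous tentMap := by unfold tentMap; fun_prop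
lemma tent_meas : Measurable tentMap := tent_cont.measurable

lemma map_affine (a b : ℝ) (ha : a ≠ 0) :
    Measure.map (fun x => a * x + b) volume = ENNReal.ofReal |a⁻¹| • volume := by
  have h : (fun x : ℝ => a * x + b) = (fun y : ℝ => y + b) ∘ (fun x : ℝ => a * x) := rfl
  rw [h, ← Measure.map_map (by fun_prop) (by fun_prop), Real.map_volume_mul_left ha,
    Measure.map_smul, map_add_right_eq_self volume b]

lemma map_restrict_affine {a b : ℝ} (ha : a ≠ 0) {t : Set ℝ} (ht : MeasurableSet t) :
    Measure.map (fun x => a * x + b) (volume.restrict ((fun x => a * x + b) ⁻¹' t)) =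
      ENNReal.ofReal |a⁻¹| • volume.restrict t := by
  rw [← Measure.restrict_map (by fun_prop) ht, map_affine a b ha, Measure.restrict_smul]

lemma map_tent_right :
    Measure.map tentMap (volume.restrict (Icc (1/2 : ℝ) 1)) = ENNReal.ofReal (1/2) • μ01 := by
  have h1 : tentMap =ᵐ[volume.restrict (Icc (1/2:ℝ) 1)] fun x => (-2) * x + 2 := by
    refine (ae_restrict_iff' measurableSet_Icc).2 (Filter.Eventually.of_forall ?_)
    intro x hx
    unfold tentMap
    rw [abs_of_nonneg (by linarith [hx.1])]; ring
  have hpre : Icc (1/2:ℝ) 1 = (fun x : ℝ => (-2) * x + 2) ⁻¹' (Icc 0 1) := by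
    ext x; simp only [mem_Icc, mem_preimage]
    constructor <;> rintro ⟨u, v⟩ <;> constructor <;> linarith
  rw [Measure.map_congr h1, hpre, map_restrict_affine (by norm_num) measurableSet_Icc, μ01]
  congr 1
  rw [abs_inv, abs_neg, abs_two]
  norm_num

lemma map_tent_left :
    Measure.map tentMap (volume.restrict (Icc (0:ℝ) (1/2))) = ENNReal.ofReal (1/2) • μ01 := by
  have h1 : tentMap =ᵐ[volume.restrict (Icc (0:ℝ) (1/2))] fun x => (2:ℝ) * x + 0 := by
    refine (ae_restrict_iff' measurableSet_Icc).2 (Filter.Eventually.of_forall ?_)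
    intro x hx
    unfold tentMap
    rw [abs_of_nonpos (by linarith [hx.2])]; ring
  have hpre : Icc (0:ℝ) (1/2) = (fun x : ℝ => (2:ℝ) * x + 0) ⁻¹' (Icc 0 1) := by
    ext x; simp only [mem_Icc, mem_preimage]
    constructor <;> rintro ⟨u, v⟩ <;> constructor <;> linarith
  rw [Measure.map_congr h1, hpre, map_restrict_affine (by norm_num) measurableSet_Icc, μ01]
  congr 1
  rw [abs_inv, abs_two]
  norm_num

lemma map_tent : Measure.map tentMap μ01 = μ01 := by
  have hd : Icc (0:ℝ) 1 = Ico (0:ℝ) (1/2) ∪ Icc (1/2:ℝ) 1 := by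
    ext x; simp only [mem_Icc, mem_Ico, mem_union]
    constructor
    · rintro ⟨u, v⟩
      rcases lt_or_ge x (1/2) with h | h
      · exact Or.inl ⟨u, h⟩
      · exact Or.inr ⟨h, v⟩
    · rintro (⟨u, v⟩ | ⟨u, v⟩) <;> constructor <;> linarith
  have hres : μ01 = volume.restrict (Ico (0:ℝ) (1/2)) + volume.restrict (Icc (1/2:ℝ) 1) := by
    rw [μ01, hd]
    exact Measure.restrict_union
      (Set.disjoint_left.2 fun x hx hx' => absurd hx'.1 (not_le.2 hx.2)) measurableSet_Icc
  have hico : volume.restrict (Ico (0:ℝ) (1/2)) = volume.restrict (Icc (0:ℝ) (1/2)) :=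
    Measure.restrict_congr_set Ico_ae_eq_Icc
  conv_lhs => rw [hres, hico]
  rw [Measure.map_add _ _ tent_meas, map_tent_left, map_tent_right, ← add_smul,
    ← ENNReal.ofReal_add (by norm_num) (by norm_num)]
  norm_num

lemma mp_tent : MeasurePreserving tentMap μ01 μ01 := ⟨tent_meas, map_tent⟩

noncomputable def s1 : ℝ → ℝ := fun y => (-(1/2) : ℝ) * y + 1
noncomputable def s2 : ℝ → ℝ := fun y => ((1/2) : ℝ) * y + 0

lemma s1_meas : Measurable s1 := by unfold s1; fun_prop
lemma s2_meas : Measurable s2 := by unfold s2; fun_prop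

lemma map_s1 : Measure.map s1 μ01 = ENNReal.ofReal 2 • volume.restrict (Icc (1/2:ℝ) 1) := by
  have hpre : Icc (0:ℝ) 1 = (fun y : ℝ => (-(1/2) : ℝ) * y + 1) ⁻¹' (Icc (1/2) 1) := by
    ext x; simp only [mem_Icc, mem_preimage]
    constructor <;> rintro ⟨u, v⟩ <;> constructor <;> linarith
  rw [μ01, hpre]
  rw [show s1 = fun y : ℝ => (-(1/2) : ℝ) * y + 1 from rfl]
  rw [map_restrict_affine (by norm_num) measurableSet_Icc]
  norm_num

lemma map_s2 : Measure.map s2 μ01 = ENNReal.ofReal 2 • volume.restrict (Icc (0:ℝ) (1/2)) := by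
  have hpre : Icc (0:ℝ) 1 = (fun y : ℝ => ((1/2) : ℝ) * y + 0) ⁻¹' (Icc 0 (1/2)) := by
    ext x; simp only [mem_Icc, mem_preimage]
    constructor <;> rintro ⟨u, v⟩ <;> constructor <;> linarith
  rw [μ01, hpre]
  rw [show s2 = fun y : ℝ => ((1/2) : ℝ) * y + 0 from rfl]
  rw [map_restrict_affine (by norm_num) measurableSet_Icc]
  norm_num

lemma smul_restrict_le (c : ℝ≥0∞) {s : Set ℝ} (hs : s ⊆ Icc (0:ℝ) 1) :
    c • volume.restrict s ≤ c • μ01 := by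
  refine Measure.le_iff.2 fun t ht => ?_
  simp only [Measure.smul_apply, smul_eq_mul]
  exact mul_le_mul_right (by
    rw [Measure.restrict_apply ht, μ01, Measure.restrict_apply ht]
    exact measure_mono (inter_subset_inter_right _ hs)) c

lemma map_s1_le : Measure.map s1 μ01 ≤ (2:ℝ≥0∞) • μ01 := by
  rw [map_s1, show ENNReal.ofReal 2 = (2:ℝ≥0∞) by norm_num]
  exact smul_restrict_le 2 (Icc_subset_Icc (by norm_num) le_rfl)

lemma map_s2_le : Measure.map s2 μ01 ≤ (2:ℝ≥0∞) • μ01 := by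
  rw [map_s2, show ENNReal.ofReal 2 = (2:ℝ≥0∞) by norm_num]
  exact smul_restrict_le 2 (Icc_subset_Icc le_rfl (by norm_num))

lemma map_tent_le : Measure.map tentMap μ01 ≤ (1:ℝ≥0∞) • μ01 := by
  rw [map_tent, one_smul]


section W

variable {g : ℝ → ℝ} {s : Set ℝ} {B : ℝ≥0∞}

noncomputable def kern (s : Set ℝ) (c : ℂ) (g : ℝ → ℝ) (f : ℝ → ℂ) : ℝ → ℂ :=
  fun x => s.indicator (fun _ => c) x * f (g x)

lemma kern_eq (s : Set ℝ) (c : ℂ) (g : ℝ → ℝ) (f : ℝ → ℂ) :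
    kern s c g f = s.indicator (fun x => c * f (g x)) := by
  ext x
  by_cases h : x ∈ s <;> simp [kern, h]

lemma habs (hg : Measurable g) (hq : Measure.map g μ01 ≤ B • μ01) :
    Measure.map g μ01 ≪ μ01 :=
  (Measure.absolutelyContinuous_of_le hq).trans Measure.smul_absolutelyContinuous

lemma qmp (hg : Measurable g) (hq : Measure.map g μ01 ≤ B • μ01) :
    Measure.QuasiMeasurePreserving g μ01 μ01 := ⟨hg, habs hg hq⟩

lemma memLp_kern (hg : Measurable g) (hs : MeasurableSet s) (c : ℂ)
    (hq : Measure.map g μ01 ≤ B • μ01) (hB : B ≠ ∞) (φ : Lp ℂ 2 μ01) :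
    MemLp (kern s c g φ) 2 μ01 := by
  rw [kern_eq]
  refine MemLp.indicator hs (MemLp.const_mul ?_ c)
  constructor
  · exact (Lp.aestronglyMeasurable φ).comp_quasiMeasurePreserving (qmp hg hq)
  · have h1 : eLpNorm (fun x => (φ : ℝ → ℂ) (g x)) 2 μ01
        = eLpNorm (φ : ℝ → ℂ) 2 (Measure.map g μ01) :=
      (eLpNorm_map_measure ((Lp.aestronglyMeasurable φ).mono_ac (habs hg hq))
        hg.aemeasurable).symm
    rw [h1]
    calc eLpNorm (φ : ℝ → ℂ) 2 (Measure.map g μ01)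
        ≤ eLpNorm (φ : ℝ → ℂ) 2 (B • μ01) := eLpNorm_mono_measure _ hq
      _ = B ^ (1/(2:ℝ≥0∞)).toReal • eLpNorm (φ : ℝ → ℂ) 2 μ01 :=
          eLpNorm_smul_measure_of_ne_top (by norm_num) _ _
      _ < ∞ := by
          rw [smul_eq_mul]
          exact ENNReal.mul_lt_top
            (ENNReal.rpow_lt_top_of_nonneg (by positivity) hB) (Lp.eLpNorm_lt_top φ)

lemma eLpNorm_kern_eq (hg : Measurable g) (hs : MeasurableSet s) (c : ℂ)
    (hq : Measure.map g μ01 ≤ B • μ01) (φ : Lp ℂ 2 μ01) :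
    eLpNorm (kern s c g φ) 2 μ01
      = (‖c‖₊ : ℝ≥0∞) * eLpNorm (φ : ℝ → ℂ) 2 (Measure.map g (μ01.restrict s)) := by
  have hle : Measure.map g (μ01.restrict s) ≤ Measure.map g μ01 :=
    Measure.map_mono Measure.restrict_le_self hg
  have hac : Measure.map g (μ01.restrict s) ≪ μ01 :=
    (Measure.absolutelyContinuous_of_le hle).trans (habs hg hq)
  rw [kern_eq, eLpNorm_indicator_eq_eLpNorm_restrict hs]
  have h2 : (fun x => c * (φ : ℝ → ℂ) (g x)) = c • ((φ : ℝ → ℂ) ∘ g) := rfl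
  rw [h2, eLpNorm_const_smul]
  have h3 : eLpNorm ((φ : ℝ → ℂ) ∘ g) 2 (μ01.restrict s)
      = eLpNorm (φ : ℝ → ℂ) 2 (Measure.map g (μ01.restrict s)) :=
    (eLpNorm_map_measure ((Lp.aestronglyMeasurable φ).mono_ac hac) hg.aemeasurable).symm
  rw [h3, enorm_eq_nnnorm]

noncomputable def W (hg : Measurable g) (hs : MeasurableSet s) (c : ℂ)
    (hq : Measure.map g μ01 ≤ B • μ01) (hB : B ≠ ∞) :
    Lp ℂ 2 μ01 →L[ℂ] Lp ℂ 2 μ01 :=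
  LinearMap.mkContinuous
    { toFun := fun φ => (memLp_kern hg hs c hq hB φ).toLp _
      map_add' := fun φ ψ => by
        rw [← MemLp.toLp_add]
        apply MemLp.toLp_congr
        have h := (qmp hg hq).ae_eq_comp (Lp.coeFn_add φ ψ)
        filter_upwards [h] with x hx
        simp only [Function.comp_apply, Pi.add_apply] at hx
        simp only [kern, Pi.add_apply, hx]
        ring
      map_smul' := fun a φ => by
        simp only [RingHom.id_apply]
        rw [← MemLp.toLp_const_smul]
        apply MemLp.toLp_congr
        have h := (qmp hg hq).ae_eq_comp (Lp.coeFn_smul a φ)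
        filter_upwards [h] with x hx
        simp only [Function.comp_apply, Pi.smul_apply, smul_eq_mul] at hx
        simp only [kern, Pi.smul_apply, hx, smul_eq_mul]
        ring }
    (‖c‖ * (B.toReal) ^ ((1:ℝ)/2))
    (fun φ => by
      simp only [LinearMap.coe_mk, AddHom.coe_mk]
      rw [Lp.norm_toLp _ (memLp_kern hg hs c hq hB φ), Lp.norm_def]
      have hle : Measure.map g (μ01.restrict s) ≤ Measure.map g μ01 :=
        Measure.map_mono Measure.restrict_le_self hg
      have hbound : eLpNorm (kern s c g φ) 2 μ01
          ≤ (‖c‖₊ : ℝ≥0∞) * (B ^ ((1:ℝ)/2) * eLpNorm (φ : ℝ → ℂ) 2 μ01) := by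
        rw [eLpNorm_kern_eq hg hs c hq φ]
        refine mul_le_mul_right ?_ _
        calc eLpNorm (φ : ℝ → ℂ) 2 (Measure.map g (μ01.restrict s))
            ≤ eLpNorm (φ : ℝ → ℂ) 2 (B • μ01) :=
              eLpNorm_mono_measure _ (hle.trans hq)
          _ = B ^ (1/(2:ℝ≥0∞)).toReal • eLpNorm (φ : ℝ → ℂ) 2 μ01 :=
              eLpNorm_smul_measure_of_ne_top (by norm_num) _ _
          _ = B ^ ((1:ℝ)/2) * eLpNorm (φ : ℝ → ℂ) 2 μ01 := by
              rw [smul_eq_mul]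
              norm_num
      calc (eLpNorm (kern s c g φ) 2 μ01).toReal
          ≤ ((‖c‖₊ : ℝ≥0∞) * (B ^ ((1:ℝ)/2) * eLpNorm (φ : ℝ → ℂ) 2 μ01)).toReal := by
            refine ENNReal.toReal_mono ?_ hbound
            exact ENNReal.mul_ne_top ENNReal.coe_ne_top
              (ENNReal.mul_ne_top (ENNReal.rpow_ne_top_of_nonneg (by positivity) hB)
                (Lp.eLpNorm_ne_top φ))
        _ = ‖c‖ * (B.toReal ^ ((1:ℝ)/2)) * (eLpNorm (φ : ℝ → ℂ) 2 μ01).toReal := by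
            rw [ENNReal.toReal_mul, ENNReal.toReal_mul, ← ENNReal.toReal_rpow]
            simp [mul_assoc]
      )

lemma W_coe (hg : Measurable g) (hs : MeasurableSet s) (c : ℂ)
    (hq : Measure.map g μ01 ≤ B • μ01) (hB : B ≠ ∞) (φ : Lp ℂ 2 μ01) :
    (W hg hs c hq hB φ : ℝ → ℂ) =ᵐ[μ01] kern s c g φ :=
  MemLp.coeFn_toLp (memLp_kern hg hs c hq hB φ)

end W

noncomputable def cs : ℂ := (Real.sqrt 2 : ℂ)

lemma cs_ne : cs ≠ 0 := by
  simp only [cs, ne_eq, Complex.ofReal_eq_zero]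
  exact (Real.sqrt_pos.2 (by norm_num)).ne'

noncomputable def T1 : Lp ℂ 2 μ01 →L[ℂ] Lp ℂ 2 μ01 :=
  W (s := Icc (1/2:ℝ) 1) tent_meas measurableSet_Icc cs map_tent_le one_ne_top

noncomputable def T2 : Lp ℂ 2 μ01 →L[ℂ] Lp ℂ 2 μ01 :=
  W (s := Icc (0:ℝ) (1/2)) tent_meas measurableSet_Icc cs map_tent_le one_ne_top

noncomputable def S1 : Lp ℂ 2 μ01 →L[ℂ] Lp ℂ 2 μ01 :=
  W (s := (univ : Set ℝ)) s1_meas MeasurableSet.univ cs⁻¹ map_s1_le ofNat_ne_top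

noncomputable def S2 : Lp ℂ 2 μ01 →L[ℂ] Lp ℂ 2 μ01 :=
  W (s := (univ : Set ℝ)) s2_meas MeasurableSet.univ cs⁻¹ map_s2_le ofNat_ne_top

lemma T1_coe (φ : Lp ℂ 2 μ01) :
    (T1 φ : ℝ → ℂ) =ᵐ[μ01] kern (Icc (1/2:ℝ) 1) cs tentMap φ :=
  W_coe _ _ _ _ _ φ

lemma T2_coe (φ : Lp ℂ 2 μ01) :
    (T2 φ : ℝ → ℂ) =ᵐ[μ01] kern (Icc (0:ℝ) (1/2)) cs tentMap φ :=
  W_coe _ _ _ _ _ φ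

lemma S1_coe (φ : Lp ℂ 2 μ01) :
    (S1 φ : ℝ → ℂ) =ᵐ[μ01] kern univ cs⁻¹ s1 φ :=
  W_coe _ _ _ _ _ φ

lemma S2_coe (φ : Lp ℂ 2 μ01) :
    (S2 φ : ℝ → ℂ) =ᵐ[μ01] kern univ cs⁻¹ s2 φ :=
  W_coe _ _ _ _ _ φ

lemma restrict1 : μ01.restrict (Icc (1/2:ℝ) 1) = volume.restrict (Icc (1/2:ℝ) 1) := by
  rw [μ01, Measure.restrict_restrict measurableSet_Icc,
    inter_eq_left.2 (Icc_subset_Icc (by norm_num) le_rfl)]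

lemma restrict2 : μ01.restrict (Icc (0:ℝ) (1/2)) = volume.restrict (Icc (0:ℝ) (1/2)) := by
  rw [μ01, Measure.restrict_restrict measurableSet_Icc,
    inter_eq_left.2 (Icc_subset_Icc le_rfl (by norm_num))]

lemma coeff_one : (‖cs‖₊ : ℝ≥0∞) * (ENNReal.ofReal (1/2)) ^ ((1:ℝ)/2) = 1 := by
  rw [← enorm_eq_nnnorm, ← ofReal_norm, ENNReal.ofReal_rpow_of_pos (by norm_num),
    ← ENNReal.ofReal_mul (norm_nonneg _)]
  have h1 : ‖cs‖ = Real.sqrt 2 := by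
    rw [cs, Complex.norm_real, Real.norm_eq_abs, abs_of_nonneg (Real.sqrt_nonneg 2)]
  have h2 : ((1:ℝ)/2) ^ ((1:ℝ)/2) = Real.sqrt (1/2) := (Real.sqrt_eq_rpow _).symm
  rw [h1, h2, ← Real.sqrt_mul (by norm_num : (0:ℝ) ≤ 2)]
  norm_num

lemma half_exp : ((1:ℝ≥0∞)/2).toReal = (1:ℝ)/2 := by
  rw [ENNReal.toReal_div]
  norm_num

lemma norm_W_eq {g : ℝ → ℝ} {s : Set ℝ} (hg : Measurable g) (hs : MeasurableSet s)
    (hq : Measure.map g μ01 ≤ (1:ℝ≥0∞) • μ01)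
    (hmap : Measure.map g (μ01.restrict s) = ENNReal.ofReal (1/2) • μ01)
    (φ : Lp ℂ 2 μ01) :
    ‖W hg hs cs hq one_ne_top φ‖ = ‖φ‖ := by
  have h0 : W hg hs cs hq one_ne_top φ = (memLp_kern hg hs cs hq one_ne_top φ).toLp _ := rfl
  rw [h0, Lp.norm_toLp _ (memLp_kern hg hs cs hq one_ne_top φ),
    eLpNorm_kern_eq hg hs cs hq φ, hmap,
    eLpNorm_smul_measure_of_ne_top (by norm_num : (2:ℝ≥0∞) ≠ ∞), half_exp, smul_eq_mul,
    ← mul_assoc, coeff_one, one_mul, Lp.norm_def]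

lemma T1_norm (φ : Lp ℂ 2 μ01) : ‖T1 φ‖ = ‖φ‖ :=
  norm_W_eq _ _ _ (by rw [restrict1, map_tent_right]) φ

lemma T2_norm (φ : Lp ℂ 2 μ01) : ‖T2 φ‖ = ‖φ‖ :=
  norm_W_eq _ _ _ (by rw [restrict2, map_tent_left]) φ

lemma ae_mem01 : ∀ᵐ x ∂μ01, x ∈ Icc (0:ℝ) 1 :=
  ae_restrict_mem measurableSet_Icc

lemma ae_ne_half : ∀ᵐ x ∂μ01, x ≠ (1/2:ℝ) := by
  have h : μ01 {(1/2:ℝ)} = 0 := by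
    apply le_antisymm _ (by simp)
    calc μ01 {(1/2:ℝ)} ≤ volume {(1/2:ℝ)} := Measure.le_iff'.1 Measure.restrict_le_self _
      _ = 0 := Real.volume_singleton
  have hset : {x : ℝ | ¬ x ≠ (1/2:ℝ)} = {(1/2:ℝ)} := by ext x; simp
  rw [ae_iff, hset]
  exact h

lemma inner_T2T1 (φ ψ : Lp ℂ 2 μ01) : (inner ℂ (T2 φ) (T1 ψ) : ℂ) = 0 := by
  rw [MeasureTheory.L2.inner_def]
  apply integral_eq_zero_of_ae
  filter_upwards [T2_coe φ, T1_coe ψ, ae_ne_half] with x h2 h1 hx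
  rw [Pi.zero_apply, h2, h1]
  rcases le_or_gt x (1/2:ℝ) with h | h
  · have hx1 : x ∉ Icc (1/2:ℝ) 1 := fun hm => absurd (lt_of_le_of_ne h hx) (not_lt.2 hm.1)
    simp only [kern, Set.indicator_of_notMem hx1, zero_mul, inner_zero_right]
  · have hx2 : x ∉ Icc (0:ℝ) (1/2) := fun hm => absurd h (not_lt.2 hm.2)
    simp only [kern, Set.indicator_of_notMem hx2, zero_mul, inner_zero_left]

lemma h11 : adjoint T1 * T1 = 1 :=
  (norm_map_iff_adjoint_comp_self T1).1 T1_norm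

lemma h22 : adjoint T2 * T2 = 1 :=
  (norm_map_iff_adjoint_comp_self T2).1 T2_norm

lemma h12 : adjoint T1 * T2 = 0 := by
  refine ContinuousLinearMap.ext fun φ => ?_
  refine ext_inner_right ℂ fun ψ => ?_
  rw [ContinuousLinearMap.mul_apply, adjoint_inner_left, inner_T2T1]
  simp

lemma h21 : adjoint T2 * T1 = 0 := by
  refine ContinuousLinearMap.ext fun φ => ?_
  refine ext_inner_right ℂ fun ψ => ?_
  rw [ContinuousLinearMap.mul_apply, adjoint_inner_left, ← inner_conj_symm, inner_T2T1]
  simp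

lemma hs1x {x : ℝ} (hx : x ∈ Icc (1/2:ℝ) 1) : s1 (tentMap x) = x := by
  unfold s1 tentMap
  rw [abs_of_nonneg (by linarith [hx.1])]
  ring

lemma hs2x {x : ℝ} (hx : x ∈ Icc (0:ℝ) (1/2)) : s2 (tentMap x) = x := by
  unfold s2 tentMap
  rw [abs_of_nonpos (by linarith [hx.2])]
  ring

lemma hsum : T1 * S1 + T2 * S2 = 1 := by
  refine ContinuousLinearMap.ext fun ψ => ?_
  have e1 : (T1 * S1 + T2 * S2) ψ = T1 (S1 ψ) + T2 (S2 ψ) := rfl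
  rw [e1, ContinuousLinearMap.one_apply]
  apply Lp.ext
  have hS1 := (qmp tent_meas map_tent_le).ae_eq_comp (S1_coe ψ)
  have hS2 := (qmp tent_meas map_tent_le).ae_eq_comp (S2_coe ψ)
  filter_upwards [Lp.coeFn_add (T1 (S1 ψ)) (T2 (S2 ψ)), T1_coe (S1 ψ), T2_coe (S2 ψ),
    hS1, hS2, ae_mem01, ae_ne_half] with x hadd h1 h2 g1 g2 hx hne
  rw [hadd, Pi.add_apply, h1, h2]
  have g1' : ((S1 ψ : ℝ → ℂ)) (tentMap x) = kern univ cs⁻¹ s1 (ψ : ℝ → ℂ) (tentMap x) := g1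
  have g2' : ((S2 ψ : ℝ → ℂ)) (tentMap x) = kern univ cs⁻¹ s2 (ψ : ℝ → ℂ) (tentMap x) := g2
  simp only [kern] at g1' g2' ⊢
  rw [g1', g2']
  simp only [Set.indicator_univ]
  rcases lt_or_ge x (1/2:ℝ) with h | h
  · have hx1 : x ∉ Icc (1/2:ℝ) 1 := fun hm => absurd hm.1 (not_le.2 h)
    have hx2 : x ∈ Icc (0:ℝ) (1/2) := ⟨hx.1, le_of_lt h⟩
    rw [Set.indicator_of_notMem hx1, Set.indicator_of_mem hx2, hs2x hx2, zero_mul, zero_add,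
      ← mul_assoc, mul_inv_cancel₀ cs_ne, one_mul]
  · have h' : (1/2:ℝ) < x := lt_of_le_of_ne h (Ne.symm hne)
    have hx1 : x ∈ Icc (1/2:ℝ) 1 := ⟨h, hx.2⟩
    have hx2 : x ∉ Icc (0:ℝ) (1/2) := fun hm => absurd h' (not_lt.2 hm.2)
    rw [Set.indicator_of_mem hx1, Set.indicator_of_notMem hx2, hs1x hx1, zero_mul, add_zero,
      ← mul_assoc, mul_inv_cancel₀ cs_ne, one_mul]

lemma hadj1 : adjoint T1 = S1 := by
  calc adjoint T1 = adjoint T1 * (T1 * S1 + T2 * S2) := by rw [hsum, mul_one]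
    _ = (adjoint T1 * T1) * S1 + (adjoint T1 * T2) * S2 := by
        rw [mul_add, ← mul_assoc, ← mul_assoc]
    _ = S1 := by rw [h11, h12, one_mul, zero_mul, add_zero]

lemma hadj2 : adjoint T2 = S2 := by
  calc adjoint T2 = adjoint T2 * (T1 * S1 + T2 * S2) := by rw [hsum, mul_one]
    _ = (adjoint T2 * T1) * S1 + (adjoint T2 * T2) * S2 := by
        rw [mul_add, ← mul_assoc, ← mul_assoc]
    _ = S2 := by rw [h22, h21, one_mul, zero_mul, zero_add]

lemma hfinal : T1 * adjoint T1 + T2 * adjoint T2 = 1 := by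
  rw [hadj1, hadj2]
  exact hsum

end TC

/-- On L²([0,1]) the operators (T₁φ)(x) = χ_{[1/2,1]}(x)√2 φ(Λ(x)) and
(T₂φ)(x) = χ_{[0,1/2]}(x)√2 φ(Λ(x)) are isometries satisfying the Cuntz O₂
relations Tᵢ*Tⱼ = δᵢⱼ I and T₁T₁* + T₂T₂* = I. -/
theorem tent_operators_cuntz_O2 :
    ∃ T₁ T₂ : Lp ℂ 2 μ01 →L[ℂ] Lp ℂ 2 μ01,
      (∀ φ : Lp ℂ 2 μ01, (T₁ φ : ℝ → ℂ) =ᵐ[μ01]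
        fun x => (Set.Icc (1/2 : ℝ) 1).indicator (fun _ => (Real.sqrt 2 : ℂ)) x
          * φ (tentMap x)) ∧
      (∀ φ : Lp ℂ 2 μ01, (T₂ φ : ℝ → ℂ) =ᵐ[μ01]
        fun x => (Set.Icc (0 : ℝ) (1/2)).indicator (fun _ => (Real.sqrt 2 : ℂ)) x
          * φ (tentMap x)) ∧
      Isometry T₁ ∧ Isometry T₂ ∧
      adjoint T₁ * T₁ = 1 ∧ adjoint T₁ * T₂ = 0 ∧
      adjoint T₂ * T₁ = 0 ∧ adjoint T₂ * T₂ = 1 ∧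
      T₁ * adjoint T₁ + T₂ * adjoint T₂ = 1 := by
  refine ⟨TC.T1, TC.T2, fun φ => TC.T1_coe φ, fun φ => TC.T2_coe φ,
    AddMonoidHomClass.isometry_of_norm _ TC.T1_norm,
    AddMonoidHomClass.isometry_of_norm _ TC.T2_norm,
    TC.h11, TC.h12, TC.h21, TC.h22, TC.hfinal⟩
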